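/- Suppose in addition |v_j| < 1 for every j, and let |v_{j₀}| = max_j |v_j|. Then every state Q on ℂ^N with Frobenius distance ‖Q − E_ψ‖ < (1 − |v_{j₀}|²)·√(N/(N−1)) is entangled. -/

import Mathlib

open Matrix BigOperators ComplexOrder

noncomputable section

/-- The Frobenius inner product `⟨A, B⟩ = Tr(Aᴴ B)`. -/
def frobInner {m : Type*} [Fintype m] (A B : Matrix m m ℂ) : ℂ :=
  (Aᴴ * B).trace

/-- The Frobenius norm associated to the Frobenius inner product. -/
def frobNorm {m : Type*} [Fintype m] (A : Matrix m m ℂ) : ℝ :=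
  Real.sqrt (frobInner A A).re

/-- A state (density matrix): a positive semidefinite (Hermitian) matrix of trace one. -/
def IsState {m : Type*} [Fintype m] (M : Matrix m m ℂ) : Prop :=
  M.PosSemidef ∧ M.trace = 1

/-- A pure state: a rank-one orthogonal projection, i.e. a Hermitian idempotent of trace one. -/
def IsPureState {m : Type*} [Fintype m] (M : Matrix m m ℂ) : Prop :=
  M.IsHermitian ∧ M * M = M ∧ M.trace = 1

/-- The Kronecker product of the matrices `A α`, realized on the tuple basis of the
tensor product `ℂ^{n 0} ⊗ ⋯ ⊗ ℂ^{n (p-1)} ≃ ℂ^N`, `N = ∏ α, n α`. -/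
def prodMat {p : ℕ} {n : Fin p → ℕ} (A : ∀ α, Matrix (Fin (n α)) (Fin (n α)) ℂ) :
    Matrix (∀ α, Fin (n α)) (∀ α, Fin (n α)) ℂ :=
  fun j k => ∏ α, A α (j α) (k α)

/-- A pure product state: a Kronecker product of pure states on the factors. -/
def IsPureProductState {p : ℕ} {n : Fin p → ℕ}
    (M : Matrix (∀ α, Fin (n α)) (∀ α, Fin (n α)) ℂ) : Prop :=
  ∃ A : ∀ α, Matrix (Fin (n α)) (Fin (n α)) ℂ,
    (∀ α, IsPureState (A α)) ∧ M = prodMat A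

/-- A (fully) separable state: a finite convex combination of pure product states. -/
def IsSeparableState {p : ℕ} {n : Fin p → ℕ}
    (M : Matrix (∀ α, Fin (n α)) (∀ α, Fin (n α)) ℂ) : Prop :=
  ∃ (k : ℕ) (c : Fin k → ℝ) (P : Fin k → Matrix (∀ α, Fin (n α)) (∀ α, Fin (n α)) ℂ),
    (∀ i, 0 ≤ c i) ∧ (∑ i, c i) = 1 ∧ (∀ i, IsPureProductState (P i)) ∧
      M = ∑ i, (c i : ℂ) • P i

/-- The vector `ψ = ∑ j, v j • (e j ⊗ ⋯ ⊗ e j)`, where `e j` is the `j`-th standard basis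
vector of each factor (embedded via `n 0 ≤ n α`). -/
def psiVec {p : ℕ} {n : Fin (p + 2) → ℕ} (hn : Monotone n) (v : Fin (n 0) → ℂ) :
    (∀ α, Fin (n α)) → ℂ :=
  fun x => ∑ j : Fin (n 0), v j *
    ∏ α, (if x α = Fin.castLE (hn (Fin.zero_le α)) j then (1 : ℂ) else 0)

/-- The pure state `E_ψ = |ψ⟩⟨ψ|`. -/
def Epsi {p : ℕ} {n : Fin (p + 2) → ℕ} (hn : Monotone n) (v : Fin (n 0) → ℂ) :
    Matrix (∀ α, Fin (n α)) (∀ α, Fin (n α)) ℂ :=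
  fun x y => psiVec hn v x * star (psiVec hn v y)

/-! For a separable `Q` the overlap `Re ⟨E_ψ, Q⟩` is at most `λ = max_j |v_j|²`. Indeed, on a pure
product state `⊗ A_α` the overlap is the quadratic form `∑ v̄_j v_k ∏_α (A_α)_{jk}`, and
`|(A_α)_{jk}| ≤ √((A_α)_{jj} (A_α)_{kk})` by positive semidefiniteness; the resulting weights
`t_j = ∏_α √((A_α)_{jj})` sum to at most one by Cauchy–Schwarz on two factors, so the overlap is at
most `(∑ |v_j| t_j)² ≤ λ`.

On the other hand `Q - E_ψ` is traceless, i.e. orthogonal to the identity, so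
`1 - Re ⟨E_ψ, Q⟩ = -Re ⟨E_ψ - I/N, Q - E_ψ⟩ ≤ ‖E_ψ - I/N‖ ‖Q - E_ψ‖ = √(1 - 1/N) ‖Q - E_ψ‖`.
Together, `‖Q - E_ψ‖ ≥ (1 - λ) √(N/(N-1))` for every separable `Q`. -/

open scoped InnerProductSpace MatrixOrder

section Frobenius

variable {m : Type*}

def frobVec (A : Matrix m m ℂ) : EuclideanSpace ℂ (m × m) := WithLp.toLp 2 A.vec

theorem frobVec_sub (A B : Matrix m m ℂ) : frobVec (A - B) = frobVec A - frobVec B := rfl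

variable [Fintype m]

theorem frobInner_eq_inner (A B : Matrix m m ℂ) : frobInner A B = ⟪frobVec A, frobVec B⟫_ℂ := by
  rw [frobInner, ← star_vec_dotProduct_vec, frobVec, frobVec, EuclideanSpace.inner_toLp_toLp,
    dotProduct_comm]

theorem frobNorm_eq_norm (A : Matrix m m ℂ) : frobNorm A = ‖frobVec A‖ := by
  rw [frobNorm, frobInner_eq_inner, norm_eq_sqrt_re_inner (𝕜 := ℂ)]
  rfl

end Frobenius

theorem one_sub_re_inner_le_mul_norm_sub {V : Type*} [NormedAddCommGroup V]
    [InnerProductSpace ℂ V] {u e q : V} (hue : ⟪u, e⟫_ℂ = 1) (huq : ⟪u, q⟫_ℂ = 1)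
    (he : ‖e‖ = 1) :
    1 - (⟪e, q⟫_ℂ).re ≤ √(1 - (‖u‖ ^ 2)⁻¹) * ‖q - e‖ := by
  have hu : ‖u‖ ≠ 0 := by
    rintro h
    rw [norm_eq_zero.mp h, inner_zero_left] at hue
    exact zero_ne_one hue
  set c : ℝ := (‖u‖ ^ 2)⁻¹
  -- `f` is `e` minus its projection onto `u`; as `q - e ⟂ u`, pairing with `f` or `e` agrees.
  set f := e - (c : ℂ) • u
  have hfq : ⟪f, q - e⟫_ℂ = ⟪e, q⟫_ℂ - 1 := by simp [f, hue, huq, he]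
  have hf : ‖f‖ ^ 2 = 1 - c := by
    have hc : c * ‖u‖ ^ 2 = 1 := inv_mul_cancel₀ (pow_ne_zero 2 hu)
    rw [norm_sub_sq (𝕜 := ℂ), inner_smul_right, ← inner_conj_symm, hue, norm_smul, he]
    simp only [map_one, mul_one, Complex.ofReal_re, Complex.norm_real, Real.norm_eq_abs,
      mul_pow, sq_abs, RCLike.re_to_complex]
    linear_combination c * hc
  calc 1 - (⟪e, q⟫_ℂ).re = -(⟪f, q - e⟫_ℂ).re := by simp [hfq]
    _ ≤ ‖⟪f, q - e⟫_ℂ‖ := (neg_le_abs _).trans (Complex.abs_re_le_norm _)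
    _ ≤ ‖f‖ * ‖q - e‖ := norm_inner_le_norm _ _
    _ = √(1 - c) * ‖q - e‖ := by rw [← hf, Real.sqrt_sq (norm_nonneg f)]

theorem one_sub_re_frobInner_le {m : Type*} [Fintype m] [DecidableEq m] {E Q : Matrix m m ℂ}
    (hE : E.trace = 1) (hEE : frobNorm E = 1) (hQ : Q.trace = 1) :
    1 - (frobInner E Q).re ≤ √(1 - (Fintype.card m : ℝ)⁻¹) * frobNorm (Q - E) := by
  have hone (A : Matrix m m ℂ) : ⟪frobVec 1, frobVec A⟫_ℂ = A.trace := by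
    simp [← frobInner_eq_inner, frobInner]
  have hcard : ‖frobVec (1 : Matrix m m ℂ)‖ ^ 2 = Fintype.card m := by
    rw [← frobNorm_eq_norm, frobNorm, Real.sq_sqrt] <;> simp [frobInner]
  rw [frobInner_eq_inner, frobNorm_eq_norm, frobVec_sub, ← hcard]
  exact one_sub_re_inner_le_mul_norm_sub ((hone E).trans hE) ((hone Q).trans hQ)
    ((frobNorm_eq_norm E).symm.trans hEE)

theorem sum_mul_star_eq_one {ι : Type*} [Fintype ι] {v : ι → ℂ} (hv : ∑ j, ‖v j‖ ^ 2 = 1) :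
    ∑ j, v j * star (v j) = 1 := by
  simp only [Complex.star_def, Complex.mul_conj, Complex.normSq_eq_norm_sq]
  exact_mod_cast hv

section Psi

variable {p : ℕ} {n : Fin (p + 2) → ℕ} (hn : Monotone n)

def diagIndex (j : Fin (n 0)) : ∀ α, Fin (n α) :=
  fun α => Fin.castLE (hn (Fin.zero_le α)) j

theorem diagIndex_injective : Function.Injective (diagIndex hn) :=
  fun _ _ h => Fin.castLE_injective _ (congrFun h 0)

theorem psiVec_apply (v : Fin (n 0) → ℂ) (x : ∀ α, Fin (n α)) :
    psiVec hn v x = ∑ j, if x = diagIndex hn j then v j else 0 := by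
  simp only [psiVec, Fintype.prod_boole, mul_ite, mul_one, mul_zero, funext_iff, diagIndex]

theorem sum_psiVec_mul (v : Fin (n 0) → ℂ) (f : (∀ α, Fin (n α)) → ℂ) :
    ∑ x, psiVec hn v x * f x = ∑ j, v j * f (diagIndex hn j) := by
  simp only [psiVec_apply, Finset.sum_mul, ite_mul, zero_mul]
  rw [Finset.sum_comm]
  simp

theorem star_psiVec (v : Fin (n 0) → ℂ) (x : ∀ α, Fin (n α)) :
    star (psiVec hn v x) = psiVec hn (star v) x := by
  simp [psiVec_apply, star_sum, apply_ite star]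

theorem psiVec_diagIndex (v : Fin (n 0) → ℂ) (j : Fin (n 0)) :
    psiVec hn v (diagIndex hn j) = v j := by
  simp [psiVec_apply, (diagIndex_injective hn).eq_iff]

theorem frobInner_Epsi_left (v : Fin (n 0) → ℂ)
    (B : Matrix (∀ α, Fin (n α)) (∀ α, Fin (n α)) ℂ) :
    frobInner (Epsi hn v) B =
      ∑ j, star (v j) * ∑ k, v k * B (diagIndex hn j) (diagIndex hn k) := by
  simp only [frobInner, Matrix.trace, Matrix.diag, Matrix.mul_apply, Matrix.conjTranspose_apply,
    Epsi, star_mul', star_star, mul_assoc]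
  rw [Finset.sum_comm]
  simp only [← Finset.mul_sum, sum_psiVec_mul, star_psiVec, Pi.star_apply]

theorem trace_Epsi (v : Fin (n 0) → ℂ) (hv : ∑ j, ‖v j‖ ^ 2 = 1) : (Epsi hn v).trace = 1 := by
  simp only [Matrix.trace, Matrix.diag, Epsi, sum_psiVec_mul, psiVec_diagIndex]
  exact sum_mul_star_eq_one hv

theorem frobNorm_Epsi (v : Fin (n 0) → ℂ) (hv : ∑ j, ‖v j‖ ^ 2 = 1) :
    frobNorm (Epsi hn v) = 1 := by
  have hterm (j : Fin (n 0)) : star (v j) * ∑ k, v k * (v j * star (v k)) =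
      v j * star (v j) * ∑ k, v k * star (v k) := by
    simp only [Finset.mul_sum]
    exact Finset.sum_congr rfl fun k _ => by ring
  simp only [frobNorm, frobInner_Epsi_left, Epsi, psiVec_diagIndex, hterm,
    sum_mul_star_eq_one hv, mul_one, Complex.one_re, Real.sqrt_one]

end Psi

theorem Matrix.PosSemidef.norm_apply_le {k : Type*} [Fintype k] {A : Matrix k k ℂ}
    (hA : A.PosSemidef) (i j : k) : ‖A i j‖ ≤ √(A i i).re * √(A j j).re := by
  classical
  obtain ⟨B, rfl⟩ := CStarAlgebra.nonneg_iff_eq_star_mul_self.mp hA.nonneg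
  let col (i : k) : EuclideanSpace ℂ k := WithLp.toLp 2 (fun s => B s i)
  have hcol (i j : k) : (star B * B) i j = ⟪col i, col j⟫_ℂ := by
    simp [col, EuclideanSpace.inner_toLp_toLp, Matrix.mul_apply, dotProduct, mul_comm]
  rw [hcol, hcol i i, hcol j j]
  exact (norm_inner_le_norm _ _).trans_eq <| by
    rw [norm_eq_sqrt_re_inner (𝕜 := ℂ), norm_eq_sqrt_re_inner (𝕜 := ℂ)]; rfl

theorem IsPureState.posSemidef {k : Type*} [Fintype k] {A : Matrix k k ℂ} (hA : IsPureState A) :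
    A.PosSemidef := by
  have h := Matrix.posSemidef_conjTranspose_mul_self A
  rwa [hA.1.eq, hA.2.1] at h

theorem IsPureState.sum_re_diag {k : Type*} [Fintype k] {A : Matrix k k ℂ} (hA : IsPureState A) :
    ∑ i, (A i i).re = 1 := by
  simpa [Matrix.trace] using congrArg Complex.re hA.2.2

theorem IsPureState.re_diag_nonneg {k : Type*} [Fintype k] {A : Matrix k k ℂ}
    (hA : IsPureState A) (i : k) : 0 ≤ (A i i).re :=
  (Complex.nonneg_iff.mp hA.posSemidef.diag_nonneg).1

theorem IsPureState.sum_re_diag_comp_le {J k : Type*} [Fintype J] [Fintype k]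
    {A : Matrix k k ℂ} (hA : IsPureState A) {g : J → k} (hg : Function.Injective g) :
    ∑ j, (A (g j) (g j)).re ≤ 1 :=
  (Finset.sum_map Finset.univ ⟨g, hg⟩ fun i => (A i i).re).symm.trans_le <|
    (Finset.sum_le_univ_sum_of_nonneg hA.re_diag_nonneg).trans_eq hA.sum_re_diag

theorem sum_prod_sqrt_le_one {ι J : Type*} [Fintype ι] [Fintype J] {a b : ι} (hab : a ≠ b)
    (d : ι → J → ℝ) (hd0 : ∀ α j, 0 ≤ d α j) (hd1 : ∀ α, ∑ j, d α j ≤ 1) :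
    ∑ j, ∏ α, √(d α j) ≤ 1 := by
  have hle1 (α : ι) (j : J) : √(d α j) ≤ 1 :=
    Real.sqrt_le_one.mpr <| (Finset.single_le_sum (fun j _ => hd0 α j) (Finset.mem_univ j)).trans
      (hd1 α)
  have hprod (j : J) : ∏ α, √(d α j) ≤ √(d a j) * √(d b j) := by
    classical
    rw [← Finset.mul_prod_erase _ _ (Finset.mem_univ a),
      ← Finset.mul_prod_erase _ _ (Finset.mem_erase.mpr ⟨hab.symm, Finset.mem_univ b⟩),
      ← mul_assoc]
    exact mul_le_of_le_one_right (by positivity)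
      (Finset.prod_le_one (fun _ _ => Real.sqrt_nonneg _) fun α _ => hle1 α j)
  calc ∑ j, ∏ α, √(d α j) ≤ ∑ j, √(d a j) * √(d b j) := Finset.sum_le_sum fun j _ => hprod j
    _ ≤ √(∑ j, d a j) * √(∑ j, d b j) :=
      Real.sum_sqrt_mul_sqrt_le _ (fun j => hd0 a j) (fun j => hd0 b j)
    _ ≤ 1 := mul_le_one₀ (Real.sqrt_le_one.mpr (hd1 a)) (Real.sqrt_nonneg _)
      (Real.sqrt_le_one.mpr (hd1 b))

theorem norm_sum_star_mul_sum_mul_le {J : Type*} [Fintype J] (w : J → ℂ) (M : Matrix J J ℂ)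
    (t : J → ℝ) (hM : ∀ j k, ‖M j k‖ ≤ t j * t k) :
    ‖∑ j, star (w j) * ∑ k, w k * M j k‖ ≤ (∑ j, ‖w j‖ * t j) ^ 2 := by
  calc ‖∑ j, star (w j) * ∑ k, w k * M j k‖
      ≤ ∑ j, ‖w j‖ * ∑ k, ‖w k‖ * (t j * t k) := by
        refine (norm_sum_le _ _).trans (Finset.sum_le_sum fun j _ => ?_)
        rw [norm_mul, norm_star]
        refine mul_le_mul_of_nonneg_left ((norm_sum_le _ _).trans
          (Finset.sum_le_sum fun k _ => ?_)) (norm_nonneg _)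
        rw [norm_mul]
        exact mul_le_mul_of_nonneg_left (hM j k) (norm_nonneg _)
    _ = (∑ j, ‖w j‖ * t j) ^ 2 := by
        rw [sq, Finset.sum_mul_sum]
        simp only [Finset.mul_sum]
        exact Finset.sum_congr rfl fun j _ => Finset.sum_congr rfl fun k _ => by ring

theorem re_frobInner_Epsi_prodMat_le {p : ℕ} {n : Fin (p + 2) → ℕ} (hn : Monotone n)
    (v : Fin (n 0) → ℂ) {j₀ : Fin (n 0)} (hj₀ : ∀ j, ‖v j‖ ≤ ‖v j₀‖)
    {A : ∀ α, Matrix (Fin (n α)) (Fin (n α)) ℂ} (hA : ∀ α, IsPureState (A α)) :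
    (frobInner (Epsi hn v) (prodMat A)).re ≤ ‖v j₀‖ ^ 2 := by
  set d : ∀ α, Fin (n 0) → ℝ := fun α j => (A α (diagIndex hn j α) (diagIndex hn j α)).re
  set t : Fin (n 0) → ℝ := fun j => ∏ α, √(d α j)
  have ht0 (j : Fin (n 0)) : 0 ≤ t j := Finset.prod_nonneg fun α _ => Real.sqrt_nonneg _
  have hentry (j k : Fin (n 0)) :
      ‖prodMat A (diagIndex hn j) (diagIndex hn k)‖ ≤ t j * t k := by
    rw [prodMat, norm_prod, ← Finset.prod_mul_distrib]
    exact Finset.prod_le_prod (fun α _ => norm_nonneg _) fun α _ =>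
      (hA α).posSemidef.norm_apply_le _ _
  have ht1 : ∑ j, t j ≤ 1 :=
    sum_prod_sqrt_le_one Fin.zero_ne_one d (fun α j => (hA α).re_diag_nonneg _) fun α =>
      (hA α).sum_re_diag_comp_le (g := fun j => diagIndex hn j α) (Fin.castLE_injective _)
  have hweighted : ∑ j, ‖v j‖ * t j ≤ ‖v j₀‖ :=
    calc ∑ j, ‖v j‖ * t j ≤ ∑ j, ‖v j₀‖ * t j :=
          Finset.sum_le_sum fun j _ => mul_le_mul_of_nonneg_right (hj₀ j) (ht0 j)
      _ ≤ ‖v j₀‖ := by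
          rw [← Finset.mul_sum]
          exact mul_le_of_le_one_right (norm_nonneg _) ht1
  calc (frobInner (Epsi hn v) (prodMat A)).re ≤ ‖frobInner (Epsi hn v) (prodMat A)‖ :=
        Complex.re_le_norm _
    _ ≤ (∑ j, ‖v j‖ * t j) ^ 2 := by
        rw [frobInner_Epsi_left]
        exact norm_sum_star_mul_sum_mul_le v _ t hentry
    _ ≤ ‖v j₀‖ ^ 2 :=
        pow_le_pow_left₀ (Finset.sum_nonneg fun j _ => mul_nonneg (norm_nonneg _) (ht0 j))
          hweighted 2

theorem IsSeparableState.re_frobInner_le {p : ℕ} {n : Fin p → ℕ}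
    {E Q : Matrix (∀ α, Fin (n α)) (∀ α, Fin (n α)) ℂ} {c : ℝ} (hQ : IsSeparableState Q)
    (hE : ∀ P, IsPureProductState P → (frobInner E P).re ≤ c) : (frobInner E Q).re ≤ c := by
  obtain ⟨k, w, P, hw0, hw1, hP, rfl⟩ := hQ
  have hlin : frobInner E (∑ i, (w i : ℂ) • P i) = ∑ i, (w i : ℂ) * frobInner E (P i) := by
    simp [frobInner, Matrix.mul_sum, Matrix.trace_sum, Matrix.trace_smul]
  calc (frobInner E (∑ i, (w i : ℂ) • P i)).re = ∑ i, w i * (frobInner E (P i)).re := by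
        simp only [hlin, Complex.re_sum, Complex.re_ofReal_mul]
    _ ≤ ∑ i, w i * c := Finset.sum_le_sum fun i _ => mul_le_mul_of_nonneg_left (hE _ (hP i)) (hw0 i)
    _ = c := by rw [← Finset.sum_mul, hw1, one_mul]

theorem sqrt_one_sub_inv_mul_sqrt_div_sub_one {x : ℝ} (hx : 1 < x) :
    √(1 - x⁻¹) * √(x / (x - 1)) = 1 := by
  have hx0 : x ≠ 0 := by positivity
  have hx1 : x - 1 ≠ 0 := sub_ne_zero.mpr hx.ne'
  rw [← Real.sqrt_mul (sub_nonneg.mpr (inv_le_one_of_one_le₀ hx.le)),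
    show (1 - x⁻¹) * (x / (x - 1)) = 1 by field_simp, Real.sqrt_one]

theorem close_to_Epsi_entangled_general {p : ℕ} {n : Fin (p + 2) → ℕ}
    (hn : Monotone n)
    (v : Fin (n 0) → ℂ) (hv : ∑ j, ‖v j‖ ^ 2 = 1)
    (j₀ : Fin (n 0)) (hj₀ : ∀ j, ‖v j‖ ≤ ‖v j₀‖)
    (Q : Matrix (∀ α, Fin (n α)) (∀ α, Fin (n α)) ℂ) (hQ : IsState Q)
    (hclose : frobNorm (Q - Epsi hn v) < (1 - ‖v j₀‖ ^ 2) *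
      Real.sqrt (((∏ α, n α : ℕ) : ℝ) / (((∏ α, n α : ℕ) : ℝ) - 1))) :
    ¬ IsSeparableState Q := by
  intro hsep
  set N : ℝ := ((∏ α, n α : ℕ) : ℝ)
  have hoverlap : (frobInner (Epsi hn v) Q).re ≤ ‖v j₀‖ ^ 2 :=
    hsep.re_frobInner_le fun _ ⟨_, hA, hP⟩ => hP ▸ re_frobInner_Epsi_prodMat_le hn v hj₀ hA
  have hcard : (Fintype.card (∀ α, Fin (n α)) : ℝ) = N := by simp [N, Fintype.card_pi]
  have hwitness := hcard ▸
    one_sub_re_frobInner_le (trace_Epsi hn v hv) (frobNorm_Epsi hn v hv) hQ.2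
  have hN : 1 < N := by
    have hradius := (Real.sqrt_nonneg _).trans_lt hclose
    have hpos : 0 < N / (N - 1) := Real.sqrt_ne_zero'.mp (right_ne_zero_of_mul hradius.ne')
    by_contra! h
    exact hpos.not_ge (div_nonpos_of_nonneg_of_nonpos (Nat.cast_nonneg _) (by linarith))
  have hsr := sqrt_one_sub_inv_mul_sqrt_div_sub_one hN
  have hs : 0 < √(1 - N⁻¹) := pos_of_mul_pos_left (hsr ▸ one_pos) (Real.sqrt_nonneg _)
  refine lt_irrefl (1 - ‖v j₀‖ ^ 2) ?_
  calc 1 - ‖v j₀‖ ^ 2 ≤ √(1 - N⁻¹) * frobNorm (Q - Epsi hn v) := by linarith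
    _ < √(1 - N⁻¹) * ((1 - ‖v j₀‖ ^ 2) * √(N / (N - 1))) := mul_lt_mul_of_pos_left hclose hs
    _ = 1 - ‖v j₀‖ ^ 2 := by rw [mul_left_comm, hsr, mul_one]

/-- Assume moreover `|v j| < 1` for every `j`, and let
`|v j₀| = max_j |v j|`.  Every state `Q` with Frobenius distance
`‖Q - E_ψ‖ < (1 - |v j₀|²) ⬝ √(N/(N-1))`, where `N = ∏ α, n α`, is entangled. -/
theorem close_to_Epsi_entangled {p : ℕ} {n : Fin (p + 2) → ℕ}
    (hn : Monotone n) (hn₁ : 2 ≤ n 0)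
    (v : Fin (n 0) → ℂ) (hv : ∑ j, ‖v j‖ ^ 2 = 1) (hv1 : ∀ j, ‖v j‖ < 1)
    (j₀ : Fin (n 0)) (hj₀ : ∀ j, ‖v j‖ ≤ ‖v j₀‖)
    (Q : Matrix (∀ α, Fin (n α)) (∀ α, Fin (n α)) ℂ) (hQ : IsState Q)
    (hclose : frobNorm (Q - Epsi hn v) < (1 - ‖v j₀‖ ^ 2) *
      Real.sqrt (((∏ α, n α : ℕ) : ℝ) / (((∏ α, n α : ℕ) : ℝ) - 1))) :
    ¬ IsSeparableState Q :=
  close_to_Epsi_entangled_general hn v hv j₀ hj₀ Q hQ hclose
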